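/- The linear map M_C : ℝ^9 → ℝ^9 defined by (c15,c16,c17,c21,c22,c23,c24,c25,c26) ↦ (d11,…,d19) with d11 = c15+c21; d12 = c15+c24; d13 = c15+c25+c26; d14 = c16+c22; d15 = c16+c23+c24; d16 = c16+c25; d17 = c17+c21+c22; d18 = c17+c23; d19 = c17+c26 is bijective, and its inverse is given explicitly by c15 = (1/2)(d11+d12+d14−d15−d17+d18); c16 = (1/2)(d11−d13+d14+d16−d17+d19); c17 = (1/2)(d12−d13−d15+d16+d18+d19); c21 = (1/2)(d11−d12−d14+d15+d17−d18); c22 = (1/2)(−d11+d13+d14−d16+d17−d19); c23 = (1/2)(−d12+d13+d15−d16+d18−d19); c24 = (1/2)(−d11+d12−d14+d15+d17−d18); c25 = (1/2)(−d11+d13−d14+d16+d17−d19); c26 = (1/2)(−d12+d13+d15−d16−d18+d19). -/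
import Mathlib


noncomputable section

/-- The type-C coefficient map `M_C : ℝ^9 → ℝ^9`, `(c15,c16,c17,c21,…,c26) ↦ (d11,…,d19)`. -/
def mC (c : Fin 9 → ℝ) : Fin 9 → ℝ :=
  ![c 0 + c 3,
    c 0 + c 6,
    c 0 + c 7 + c 8,
    c 1 + c 4,
    c 1 + c 5 + c 6,
    c 1 + c 7,
    c 2 + c 3 + c 4,
    c 2 + c 5,
    c 2 + c 8]

/-- The explicit inverse of `M_C`. -/
def mCinv (d : Fin 9 → ℝ) : Fin 9 → ℝ :=
  ![(1/2) * d 0 + (1/2) * d 1 + (1/2) * d 3 - (1/2) * d 4 - (1/2) * d 6 + (1/2) * d 7,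
    (1/2) * d 0 - (1/2) * d 2 + (1/2) * d 3 + (1/2) * d 5 - (1/2) * d 6 + (1/2) * d 8,
    (1/2) * d 1 - (1/2) * d 2 - (1/2) * d 4 + (1/2) * d 5 + (1/2) * d 7 + (1/2) * d 8,
    (1/2) * d 0 - (1/2) * d 1 - (1/2) * d 3 + (1/2) * d 4 + (1/2) * d 6 - (1/2) * d 7,
    -(1/2) * d 0 + (1/2) * d 2 + (1/2) * d 3 - (1/2) * d 5 + (1/2) * d 6 - (1/2) * d 8,
    -(1/2) * d 1 + (1/2) * d 2 + (1/2) * d 4 - (1/2) * d 5 + (1/2) * d 7 - (1/2) * d 8,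
    -(1/2) * d 0 + (1/2) * d 1 - (1/2) * d 3 + (1/2) * d 4 + (1/2) * d 6 - (1/2) * d 7,
    -(1/2) * d 0 + (1/2) * d 2 - (1/2) * d 3 + (1/2) * d 5 + (1/2) * d 6 - (1/2) * d 8,
    -(1/2) * d 1 + (1/2) * d 2 + (1/2) * d 4 - (1/2) * d 5 - (1/2) * d 7 + (1/2) * d 8]

set_option maxHeartbeats 2000000 in
/-- `M_C` is bijective and its inverse is given by the explicit formulas. -/
theorem MC_bijective_with_explicit_inverse :
    Function.Bijective mC ∧ (∀ d, mC (mCinv d) = d) ∧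
      (∀ c, mCinv (mC c) = c) := by
  have h1 : ∀ d, mC (mCinv d) = d := by
    intro d
    have e0 : mCinv d 0 = (1/2) * d 0 + (1/2) * d 1 + (1/2) * d 3 - (1/2) * d 4 - (1/2) * d 6 + (1/2) * d 7 := rfl
    have e1 : mCinv d 1 = (1/2) * d 0 - (1/2) * d 2 + (1/2) * d 3 + (1/2) * d 5 - (1/2) * d 6 + (1/2) * d 8 := rfl
    have e2 : mCinv d 2 = (1/2) * d 1 - (1/2) * d 2 - (1/2) * d 4 + (1/2) * d 5 + (1/2) * d 7 + (1/2) * d 8 := rfl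
    have e3 : mCinv d 3 = (1/2) * d 0 - (1/2) * d 1 - (1/2) * d 3 + (1/2) * d 4 + (1/2) * d 6 - (1/2) * d 7 := rfl
    have e4 : mCinv d 4 = -(1/2) * d 0 + (1/2) * d 2 + (1/2) * d 3 - (1/2) * d 5 + (1/2) * d 6 - (1/2) * d 8 := rfl
    have e5 : mCinv d 5 = -(1/2) * d 1 + (1/2) * d 2 + (1/2) * d 4 - (1/2) * d 5 + (1/2) * d 7 - (1/2) * d 8 := rfl
    have e6 : mCinv d 6 = -(1/2) * d 0 + (1/2) * d 1 - (1/2) * d 3 + (1/2) * d 4 + (1/2) * d 6 - (1/2) * d 7 := rfl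
    have e7 : mCinv d 7 = -(1/2) * d 0 + (1/2) * d 2 - (1/2) * d 3 + (1/2) * d 5 + (1/2) * d 6 - (1/2) * d 8 := rfl
    have e8 : mCinv d 8 = -(1/2) * d 1 + (1/2) * d 2 + (1/2) * d 4 - (1/2) * d 5 - (1/2) * d 7 + (1/2) * d 8 := rfl
    funext i; fin_cases i <;>
      simp only [mC, Matrix.cons_val', Matrix.cons_val_zero, Matrix.cons_val_one,
        Matrix.head_cons, Matrix.head_fin_const, Matrix.cons_val_fin_one, Matrix.empty_val',
        Matrix.cons_val_succ, Fin.isValue] <;>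
      rw [e0, e1, e2, e3, e4, e5, e6, e7, e8] <;> ring_nf <;> rfl
  have h2 : ∀ c, mCinv (mC c) = c := by
    intro c
    have e0 : mC c 0 = c 0 + c 3 := rfl
    have e1 : mC c 1 = c 0 + c 6 := rfl
    have e2 : mC c 2 = c 0 + c 7 + c 8 := rfl
    have e3 : mC c 3 = c 1 + c 4 := rfl
    have e4 : mC c 4 = c 1 + c 5 + c 6 := rfl
    have e5 : mC c 5 = c 1 + c 7 := rfl
    have e6 : mC c 6 = c 2 + c 3 + c 4 := rfl
    have e7 : mC c 7 = c 2 + c 5 := rfl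
    have e8 : mC c 8 = c 2 + c 8 := rfl
    funext i; fin_cases i <;>
      simp only [mCinv, Matrix.cons_val', Matrix.cons_val_zero, Matrix.cons_val_one,
        Matrix.head_cons, Matrix.head_fin_const, Matrix.cons_val_fin_one, Matrix.empty_val',
        Matrix.cons_val_succ, Fin.isValue] <;>
      rw [e0, e1, e2, e3, e4, e5, e6, e7, e8] <;> ring_nf <;> rfl
  exact ⟨⟨Function.LeftInverse.injective h2, Function.RightInverse.surjective h1⟩, h1, h2⟩
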